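/- arXiv:2503.07386 — 8 statements merged into one kernel-verified Lean document; each statement's English description precedes it below -/
import Mathlib

section
/- Let r, w, x, y, z be non-negative integers such that r ≥ 2, x + y = w + z, x ≥ w, x ≥ z, and x ≥ r. Then C(x,r) + C(y,r) ≥ C(w,r) + C(z,r), where C(n,k) denotes the binomial coefficient. -/
lemma choose_step (r a b : ℕ) (h : b ≤ a) :
    Nat.choose a r + Nat.choose (b+1) r ≤ Nat.choose (a+1) r + Nat.choose b r := by
  cases r with
  | zero => simp
  | succ s =>
    rw [Nat.choose_succ_succ (a), Nat.choose_succ_succ (b)]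
    have := Nat.choose_le_choose s h
    simp only [Nat.succ_eq_add_one] at *
    omega

lemma choose_shift (r : ℕ) : ∀ d a b, b ≤ a →
    Nat.choose a r + Nat.choose (b+d) r ≤ Nat.choose (a+d) r + Nat.choose b r := by
  intro d
  induction d with
  | zero => intro a b _; simp
  | succ d ih =>
    intro a b h
    rcases eq_or_lt_of_le h with rfl | hlt
    · omega
    · have h1 := ih a (b+1) hlt
      have h2 := choose_step r (a+d) b (by omega)
      have e : b + 1 + d = b + (d + 1) := by omega
      rw [e] at h1
      have e2 : a + (d + 1) = a + d + 1 := by omega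
      rw [e2]
      omega

theorem stmt_0 (r w x y z : ℕ) (hr : 2 ≤ r) (hsum : x + y = w + z)
    (hw : w ≤ x) (hz : z ≤ x) (hxr : r ≤ x) :
    Nat.choose w r + Nat.choose z r ≤ Nat.choose x r + Nat.choose y r := by
  rcases le_total z w with hc | hc
  · have h := choose_shift r (x - w) w y (by omega)
    have e1 : w + (x - w) = x := by omega
    have e2 : y + (x - w) = z := by omega
    rw [e1, e2] at h
    omega
  · have h := choose_shift r (x - z) z y (by omega)
    have e1 : z + (x - z) = x := by omega
    have e2 : y + (x - z) = w := by omega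
    rw [e1, e2] at h
    omega
end

section
/- Let r, w, x, y, z be non-negative integers such that r ≥ 2, x + y = w + z, x > w, x > z, and x ≥ r. Then C(x,r) + C(y,r) > C(w,r) + C(z,r). -/
private lemma choose_strict (t v y : ℕ) (hy : y ≤ v) (ht : t ≤ v) :
    Nat.choose y (t+1) < Nat.choose (v+1) (t+1) := by
  calc Nat.choose y (t+1) ≤ Nat.choose v (t+1) := Nat.choose_le_choose _ hy
    _ < Nat.choose v t + Nat.choose v (t+1) := by
        have := Nat.choose_pos ht; omega
    _ = Nat.choose (v+1) (t+1) := (Nat.choose_succ_succ v t).symm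

private lemma aux (t : ℕ) : ∀ d w y, t + 2 ≤ w + d + 1 → y + d + 1 ≤ w →
    Nat.choose w (t+2) + Nat.choose (y+d+1) (t+2)
      < Nat.choose (w+d+1) (t+2) + Nat.choose y (t+2) := by
  intro d
  induction d with
  | zero =>
    intro w y h1 h2
    obtain ⟨v, rfl⟩ : ∃ v, w = v + 1 := ⟨w - 1, by omega⟩
    simp only [Nat.add_zero]
    have e1 : Nat.choose (v+1+1) (t+2) = Nat.choose (v+1) (t+1) + Nat.choose (v+1) (t+2) :=
      Nat.choose_succ_succ (v+1) (t+1)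
    have e2 : Nat.choose (y+1) (t+2) = Nat.choose y (t+1) + Nat.choose y (t+2) :=
      Nat.choose_succ_succ y (t+1)
    have hlt : Nat.choose y (t+1) < Nat.choose (v+1) (t+1) :=
      choose_strict t v y (by omega) (by omega)
    have hle : Nat.choose y (t+2) ≤ Nat.choose (v+1) (t+2) :=
      Nat.choose_le_choose _ (by omega)
    omega
  | succ d ih =>
    intro w y h1 h2
    have ihs := ih (w+1) y (by omega) (by omega)
    have e1 : Nat.choose (w+1) (t+2) = Nat.choose w (t+1) + Nat.choose w (t+2) :=
      Nat.choose_succ_succ w (t+1)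
    have e2 : Nat.choose (y+d+1+1) (t+2)
        = Nat.choose (y+d+1) (t+1) + Nat.choose (y+d+1) (t+2) :=
      Nat.choose_succ_succ (y+d+1) (t+1)
    have hm : Nat.choose (y+d+1) (t+1) ≤ Nat.choose w (t+1) :=
      Nat.choose_le_choose _ (by omega)
    have : y + (d+1) + 1 = y + d + 1 + 1 := by omega
    rw [this, e2]
    have : w + (d+1) + 1 = w + 1 + d + 1 := by omega
    rw [this]
    omega

theorem stmt_1 (r w x y z : ℕ) (hr : 2 ≤ r) (hsum : x + y = w + z)
    (hw : w < x) (hz : z < x) (hxr : r ≤ x) :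
    Nat.choose w r + Nat.choose z r < Nat.choose x r + Nat.choose y r := by
  obtain ⟨t, rfl⟩ : ∃ t, r = t + 2 := ⟨r - 2, by omega⟩
  rcases le_total z w with h | h
  · obtain ⟨d, rfl⟩ : ∃ d, x = w + d + 1 := ⟨x - w - 1, by omega⟩
    obtain rfl : z = y + d + 1 := by omega
    exact aux t d w y (by omega) (by omega)
  · obtain ⟨d, rfl⟩ : ∃ d, x = z + d + 1 := ⟨x - z - 1, by omega⟩
    obtain rfl : w = y + d + 1 := by omega
    have := aux t d z y (by omega) (by omega)
    omega
end

section
/- Let G be a connected graph and let P be a longest path in G with endpoints u and v. Then the number of vertices of P is at least min{|V(G)|, deg(u) + deg(v) + 1}. -/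
/-!
Suppose `P = x₀ x₁ … x_L` (from `u = x₀` to `v = x_L`) is a longest path with fewer than `|V|`
and fewer than `deg u + deg v + 1` vertices. By maximality every neighbour of `u` or of `v` lies
on `P`, so the sets `{i < L | u ~ x_{i+1}}` and `{i < L | v ~ x_i}` have sizes at least `deg u`
and `deg v`; as these sum to more than `L`, some `i` lies in both. Then
`u x_{i+1} … x_L x_i x_{i-1} … x₀` is a closed walk through exactly the vertices of `P`. Since `G`
is connected and `P` misses a vertex, some `z ∉ P` is adjacent to a vertex `y` of `P`; opening the
closed walk at `y` and prepending `z` gives a path with `L + 1` edges, contradicting maximality.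
-/

open scoped List

namespace SimpleGraph

variable {V : Type*} {G : SimpleGraph V}

lemma Preconnected.exists_adj_of_mem_of_notMem (hG : G.Preconnected) {S : Set V} {a b : V}
    (ha : a ∈ S) (hb : b ∉ S) : ∃ y ∈ S, ∃ z ∉ S, G.Adj z y := by
  obtain ⟨w⟩ := hG a b
  obtain ⟨d, -, hy, hz⟩ := w.exists_boundary_dart S ha hb
  exact ⟨d.fst, hy, d.snd, hz, d.adj.symm⟩

namespace Walk

variable {u v : V}

lemma exists_notMem_support_of_length_support_lt [Fintype V] (p : G.Walk u v)
    (h : p.support.length < Fintype.card V) : ∃ z, z ∉ p.support := by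
  classical
  by_contra! hall
  have : Finset.univ ⊆ p.support.toFinset := fun z _ => List.mem_toFinset.mpr (hall z)
  have := (Finset.card_le_card this).trans p.support.toFinset_card_le
  simp only [Finset.card_univ] at this
  omega

lemma IsPath.mem_support_of_adj_start {p : G.Walk u v} (hp : p.IsPath)
    (hmax : ∀ (a b : V) (q : G.Walk a b), q.IsPath → q.length ≤ p.length) {x : V}
    (hx : G.Adj u x) : x ∈ p.support := by
  by_contra hxp
  have := hmax _ _ _ (hp.cons hxp : (cons hx.symm p).IsPath)
  simp at this

lemma IsPath.mem_support_of_adj_end {p : G.Walk u v} (hp : p.IsPath)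
    (hmax : ∀ (a b : V) (q : G.Walk a b), q.IsPath → q.length ≤ p.length) {x : V}
    (hx : G.Adj v x) : x ∈ p.support := by
  simpa using hp.reverse.mem_support_of_adj_start (by simpa using hmax) hx

lemma exists_crossing_adj [Fintype V] [DecidableRel G.Adj] (p : G.Walk u v)
    (hu : ∀ x, G.Adj u x → x ∈ p.support) (hv : ∀ x, G.Adj v x → x ∈ p.support)
    (hdeg : p.length < G.degree u + G.degree v) :
    ∃ i < p.length, G.Adj u (p.getVert (i + 1)) ∧ G.Adj v (p.getVert i) := by
  classical
  set A := {i ∈ Finset.range p.length | G.Adj u (p.getVert (i + 1))}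
  set B := {i ∈ Finset.range p.length | G.Adj v (p.getVert i)}
  have hA : G.degree u ≤ A.card := by
    refine Finset.card_le_card_of_surjOn (fun i => p.getVert (i + 1)) fun x hx => ?_
    rw [Finset.mem_coe, mem_neighborFinset] at hx
    obtain ⟨n, rfl, hn⟩ := mem_support_iff_exists_getVert.mp (hu x hx)
    obtain ⟨m, rfl⟩ : ∃ m, n = m + 1 := Nat.exists_eq_add_one.mpr <| Nat.pos_of_ne_zero <| by
      rintro rfl; simp at hx
    exact ⟨m, by simp [A, hx]; omega, rfl⟩
  have hB : G.degree v ≤ B.card := by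
    refine Finset.card_le_card_of_surjOn p.getVert fun x hx => ?_
    rw [Finset.mem_coe, mem_neighborFinset] at hx
    obtain ⟨n, rfl, hn⟩ := mem_support_iff_exists_getVert.mp (hv x hx)
    have hnL : n ≠ p.length := by rintro rfl; simp at hx
    exact ⟨n, by simp [B, hx]; omega, rfl⟩
  have hAB : ¬ Disjoint A B := fun hdisj => by
    have hsub : A ∪ B ⊆ Finset.range p.length :=
      Finset.union_subset (Finset.filter_subset _ _) (Finset.filter_subset _ _)
    have := Finset.card_le_card hsub
    rw [Finset.card_union_of_disjoint hdisj, Finset.card_range] at this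
    omega
  obtain ⟨i, hiA, hiB⟩ := Finset.not_disjoint_iff.mp hAB
  simp only [A, B, Finset.mem_filter, Finset.mem_range] at hiA hiB
  exact ⟨i, hiA.1, hiA.2, hiB.2⟩

lemma exists_closed_of_crossing_adj (p : G.Walk u v) {i : ℕ} (hi : i < p.length)
    (hu : G.Adj u (p.getVert (i + 1))) (hv : G.Adj v (p.getVert i)) :
    ∃ c : G.Walk u u, c.length = p.length + 1 ∧ c.support.tail ~ p.support := by
  refine ⟨cons hu ((p.drop (i + 1)).append (cons hv (p.take i).reverse)), ?_, ?_⟩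
  · simp only [length_cons, length_append, length_reverse, drop_length, take_length]
    omega
  · simp only [support_cons, List.tail_cons, support_append, support_reverse,
      drop_support_eq_support_drop_min, support_take, Nat.min_eq_left hi]
    calc p.support.drop (i + 1) ++ (p.support.take (i + 1)).reverse
        ~ (p.support.take (i + 1)).reverse ++ p.support.drop (i + 1) := List.perm_append_comm
      _ ~ p.support.take (i + 1) ++ p.support.drop (i + 1) := (List.reverse_perm _).append_right _
      _ = p.support := List.take_append_drop _ _

lemma exists_isPath_length_eq_of_adj {c : G.Walk u u} (hc : c.support.tail.Nodup)
    (hnil : ¬ c.Nil) {y z : V} (hy : y ∈ c.support.tail) (hz : z ∉ c.support.tail)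
    (hzy : G.Adj z y) : ∃ (w : V) (q : G.Walk z w), q.IsPath ∧ q.length = c.length := by
  classical
  set r := c.rotate y (List.mem_of_mem_tail hy)
  have hr : ¬ r.Nil := by rwa [nil_rotate]
  have hperm : r.dropLast.support ~ c.support.tail := by
    rw [support_dropLast hr]
    exact (r.tail_support_perm_dropLast_support.symm).trans (c.support_rotate y _).perm
  refine ⟨_, cons hzy r.dropLast, ?_, ?_⟩
  · exact (IsPath.mk' (hperm.nodup_iff.mpr hc)).cons fun hzr => hz (hperm.subset hzr)
  · rw [length_cons, length_dropLast_add_one hr, length_rotate]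

end Walk

end SimpleGraph

open SimpleGraph Walk in
theorem stmt_3_general {V : Type*} [Fintype V] (G : SimpleGraph V)
    [DecidableRel G.Adj] (hconn : G.Connected) {u v : V} (P : G.Walk u v)
    (hP : P.IsPath) (hlongest : ∀ (a b : V) (Q : G.Walk a b), Q.IsPath → Q.length ≤ P.length) :
    min (Fintype.card V) (G.degree u + G.degree v + 1) ≤ P.support.length := by
  by_contra! h
  obtain ⟨hcard, hdeg⟩ := lt_min_iff.mp h
  obtain ⟨i, hi, hu, hv⟩ := P.exists_crossing_adj (fun _ => hP.mem_support_of_adj_start hlongest)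
    (fun _ => hP.mem_support_of_adj_end hlongest) (by rw [length_support] at hdeg; omega)
  obtain ⟨c, hclen, hcperm⟩ := P.exists_closed_of_crossing_adj hi hu hv
  obtain ⟨b, hb⟩ := P.exists_notMem_support_of_length_support_lt hcard
  obtain ⟨y, hy, z, hz, hzy⟩ := hconn.preconnected.exists_adj_of_mem_of_notMem
    (S := {x | x ∈ P.support}) P.start_mem_support hb
  obtain ⟨w, q, hq, hqlen⟩ := exists_isPath_length_eq_of_adj
    (hcperm.nodup_iff.mpr hP.support_nodup) (by rw [← length_eq_zero_iff]; omega)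
    (hcperm.mem_iff.mpr hy) (mt hcperm.mem_iff.mp hz) hzy
  have := hlongest _ _ q hq
  omega

/-- **Dirac-type lemma.** If `P` is a longest path in a connected graph `G` with ends `u` and `v`,
then `|V(P)| ≥ min {|V(G)|, deg u + deg v + 1}`. -/
theorem stmt_3 {V : Type*} [Fintype V] [DecidableEq V] (G : SimpleGraph V)
    [DecidableRel G.Adj] (hconn : G.Connected) {u v : V} (P : G.Walk u v)
    (hP : P.IsPath) (hlongest : ∀ (a b : V) (Q : G.Walk a b), Q.IsPath → Q.length ≤ P.length) :
    min (Fintype.card V) (G.degree u + G.degree v + 1) ≤ P.support.length :=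
  stmt_3_general G hconn P hP hlongest
end

section
/- Let k and s be positive integers, let G be a simple graph, and let uv be an edge of G. If G contains no cycle of length at least k and no matching of size s+1, then the contracted graph G/uv contains no cycle of length at least k. -/
/-- The simple graph obtained from `G` by contracting the edge `uv`: the vertex `v` is removed and
merged into `u`. -/
def contractEdge {V : Type*} (G : SimpleGraph V) (u v : V) : SimpleGraph {w : V // w ≠ v} where
  Adj a b := (a : V) ≠ (b : V) ∧
    (G.Adj a b ∨ ((a : V) = u ∧ G.Adj v b) ∨ ((b : V) = u ∧ G.Adj a v))
  symm := by
    constructor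
    rintro a b ⟨hne, h | ⟨ha, h⟩ | ⟨hb, h⟩⟩
    · exact ⟨hne.symm, Or.inl h.symm⟩
    · exact ⟨hne.symm, Or.inr (Or.inr ⟨ha, h.symm⟩)⟩
    · exact ⟨hne.symm, Or.inr (Or.inl ⟨hb, h.symm⟩)⟩
  loopless := by constructor; rintro a ⟨hne, -⟩; exact hne rfl

/-!
Rotate a cycle of `G/uv` so that it starts at `u` whenever it passes through `u`; the rest of the
cycle is then a path avoiding `u`, hence a path of `G`. If the cycle avoids `u`, closing this path
gives the same cycle in `G`. Otherwise its two ends are joined in `G` to `u` or to `v`; closing the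
path at `u`, at `v`, or at both through the edge `uv` gives a cycle of `G` that is at least as long.
-/

namespace SimpleGraph

variable {V : Type*} {G : SimpleGraph V}

namespace Walk

lemma IsCycle.exists_eq_cons_concat {a : V} {c : G.Walk a a} (hc : c.IsCycle) :
    ∃ (x y : V) (h : G.Adj a x) (q : G.Walk x y) (h' : G.Adj y a), c = cons h (q.concat h') := by
  cases c with
  | nil => exact absurd hc.not_nil (by simp)
  | cons h p =>
    have hp := not_nil_of_isCycle_cons hc
    exact ⟨_, _, h, p.dropLast, p.adj_penultimate hp, by rw [concat_dropLast]⟩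

lemma isCycle_cons_concat_iff {w x y : V} (h : G.Adj w x) (q : G.Walk x y) (h' : G.Adj y w) :
    (cons h (q.concat h')).IsCycle ↔ q.IsPath ∧ w ∉ q.support ∧ x ≠ y := by
  rw [cons_isCycle_iff, concat_isPath_iff, edges_concat, List.concat_eq_append, List.mem_append,
    List.mem_singleton, Sym2.eq_iff]
  constructor
  · rintro ⟨⟨hq, hw⟩, hx⟩
    refine ⟨hq, hw, ?_⟩
    rintro rfl
    simp [(isPath_iff_nil.mp hq).eq_nil] at hx
  · rintro ⟨hq, hw, hxy⟩
    refine ⟨⟨hq, hw⟩, ?_⟩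
    rintro (hx | ⟨rfl, rfl⟩ | ⟨-, rfl⟩)
    · exact hw (q.fst_mem_support_of_mem_edges hx)
    · exact hw q.start_mem_support
    · exact hxy rfl

lemma IsPath.isCycle_cons_concat_concat {u v x y : V} {q : G.Walk x y} (hq : q.IsPath)
    (hu : u ∉ q.support) (hv : v ∉ q.support) (huv : G.Adj u v) (hx : G.Adj u x)
    (hy : G.Adj v y) : (cons hx ((q.concat hy.symm).concat huv.symm)).IsCycle := by
  refine (isCycle_cons_concat_iff _ _ _).mpr ⟨hq.concat hv hy.symm, ?_, ?_⟩
  · simp only [support_concat, List.mem_append, List.mem_singleton, not_or]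
    exact ⟨hu, huv.ne⟩
  · rintro rfl
    exact hv q.start_mem_support

end Walk

open Walk

lemma exists_isCycle_add_two_le_length {u v x y : V} (huv : G.Adj u v) {q : G.Walk x y}
    (hq : q.IsPath) (hu : u ∉ q.support) (hv : v ∉ q.support) (hxy : x ≠ y)
    (hx : G.Adj u x ∨ G.Adj v x) (hy : G.Adj u y ∨ G.Adj v y) :
    ∃ (b : V) (C : G.Walk b b), C.IsCycle ∧ q.length + 2 ≤ C.length := by
  rcases hx with hx | hx <;> rcases hy with hy | hy
  · exact ⟨u, cons hx (q.concat hy.symm),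
      (isCycle_cons_concat_iff _ _ _).mpr ⟨hq, hu, hxy⟩, by simp⟩
  · exact ⟨u, _, hq.isCycle_cons_concat_concat hu hv huv hx hy, by simp⟩
  · refine ⟨u, _, hq.reverse.isCycle_cons_concat_concat (by simpa) (by simpa) huv hy hx, ?_⟩
    simp
  · exact ⟨v, cons hx (q.concat hy.symm),
      (isCycle_cons_concat_iff _ _ _).mpr ⟨hq, hv, hxy⟩, by simp⟩

section contractEdge

variable {u v : V}

lemma contractEdge_adj_of_ne {a b : {w : V // w ≠ v}} (h : (contractEdge G u v).Adj a b)
    (ha : (a : V) ≠ u) (hb : (b : V) ≠ u) : G.Adj a b := by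
  obtain ⟨-, hab | ⟨hau, -⟩ | ⟨hbu, -⟩⟩ := h
  exacts [hab, absurd hau ha, absurd hbu hb]

lemma contractEdge_adj_merged {a b : {w : V // w ≠ v}} (h : (contractEdge G u v).Adj a b)
    (ha : (a : V) = u) : G.Adj u b ∨ G.Adj v b := by
  obtain ⟨hne, hab | ⟨-, hvb⟩ | ⟨hbu, -⟩⟩ := h
  exacts [Or.inl (ha ▸ hab), Or.inr hvb, absurd (ha.trans hbu.symm) hne]

def Walk.liftContractEdge : ∀ {a b : {w : V // w ≠ v}} (p : (contractEdge G u v).Walk a b),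
    (∀ z ∈ p.support, (z : V) ≠ u) → G.Walk a b
  | _, _, .nil, _ => .nil
  | _, _, .cons h p, hp =>
    .cons (contractEdge_adj_of_ne h (hp _ (by simp)) (hp _ (by simp)))
      (p.liftContractEdge fun z hz ↦ hp z (by simp [hz]))

namespace Walk

variable {a b : {w : V // w ≠ v}} {p : (contractEdge G u v).Walk a b}
  (hp : ∀ z ∈ p.support, (z : V) ≠ u)

@[simp]
lemma support_liftContractEdge :
    (p.liftContractEdge hp).support = p.support.map Subtype.val := by
  induction p with
  | nil => rfl
  | cons h p ih => simp [liftContractEdge, ih]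

@[simp]
lemma length_liftContractEdge : (p.liftContractEdge hp).length = p.length := by
  induction p with
  | nil => rfl
  | cons h p ih => simp [liftContractEdge, ih]

lemma IsPath.liftContractEdge (hpath : p.IsPath) : (p.liftContractEdge hp).IsPath := by
  rw [isPath_def, support_liftContractEdge]
  exact hpath.support_nodup.map Subtype.val_injective

end Walk

lemma exists_isCycle_le_length_of_isCycle_cons_concat (huv : G.Adj u v)
    {a x y : {w : V // w ≠ v}} {h : (contractEdge G u v).Adj a x}
    {q : (contractEdge G u v).Walk x y} {h' : (contractEdge G u v).Adj y a}
    (hc : (cons h (q.concat h')).IsCycle) (hqu : ∀ z ∈ q.support, (z : V) ≠ u) :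
    ∃ (b : V) (C : G.Walk b b), C.IsCycle ∧ (cons h (q.concat h')).length ≤ C.length := by
  obtain ⟨hq, haq, hxy⟩ := (isCycle_cons_concat_iff _ _ _).mp hc
  set Q := q.liftContractEdge hqu
  have hQ : Q.IsPath := hq.liftContractEdge hqu
  have hxy' : (x : V) ≠ y := Subtype.coe_ne_coe.mpr hxy
  have hlen : (cons h (q.concat h')).length = Q.length + 2 := by simp [Q]
  rw [hlen]
  by_cases hau : (a : V) = u
  · refine exists_isCycle_add_two_le_length huv hQ ?_ ?_ hxy' (contractEdge_adj_merged h hau)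
      (contractEdge_adj_merged h'.symm hau)
    · simp only [Q, support_liftContractEdge, List.mem_map, not_exists, not_and]
      exact hqu
    · simp [Q]
  · have hx := contractEdge_adj_of_ne h hau (hqu x q.start_mem_support)
    have hy := contractEdge_adj_of_ne h' (hqu y q.end_mem_support) hau
    refine ⟨a, cons hx (Q.concat hy),
      (isCycle_cons_concat_iff _ _ _).mpr ⟨hQ, ?_, hxy'⟩, by simp⟩
    rwa [support_liftContractEdge, List.mem_map_of_injective Subtype.val_injective]

theorem exists_isCycle_le_length_of_isCycle_contractEdge (huv : G.Adj u v)
    {a : {w : V // w ≠ v}} {c : (contractEdge G u v).Walk a a} (hc : c.IsCycle) :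
    ∃ (b : V) (C : G.Walk b b), C.IsCycle ∧ c.length ≤ C.length := by
  by_cases hcu : ∃ z ∈ c.support, (z : V) = u
  · classical
    obtain ⟨z, hz, hzu⟩ := hcu
    have hrot := hc.rotate hz
    obtain ⟨x, y, h, q, h', hq⟩ := hrot.exists_eq_cons_concat
    rw [hq] at hrot
    have hqu : ∀ w ∈ q.support, (w : V) ≠ u := fun w hw hwu ↦
      ((isCycle_cons_concat_iff _ _ _).mp hrot).2.1 (Subtype.ext (hwu.trans hzu.symm) ▸ hw)
    simpa [← hq] using exists_isCycle_le_length_of_isCycle_cons_concat huv hrot hqu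
  · push Not at hcu
    obtain ⟨x, y, h, q, h', rfl⟩ := hc.exists_eq_cons_concat
    exact exists_isCycle_le_length_of_isCycle_cons_concat huv hc fun z hz ↦ hcu z (by simp [hz])

end contractEdge

end SimpleGraph

theorem stmt_5_general {V : Type*} (G : SimpleGraph V) (k : ℕ)
    (u v : V) (huv : G.Adj u v)
    (hcyc : ¬ ∃ (a : V) (c : G.Walk a a), c.IsCycle ∧ k ≤ c.length) :
    ¬ ∃ (a : {w : V // w ≠ v}) (c : (contractEdge G u v).Walk a a), c.IsCycle ∧ k ≤ c.length := by
  rintro ⟨a, c, hc, hk⟩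
  obtain ⟨b, C, hC, hle⟩ := SimpleGraph.exists_isCycle_le_length_of_isCycle_contractEdge huv hc
  exact hcyc ⟨b, C, hC, hk.trans hle⟩

theorem stmt_5 {V : Type*} [Fintype V] (G : SimpleGraph V) (k s : ℕ) (hk : 1 ≤ k) (hs : 1 ≤ s)
    (u v : V) (huv : G.Adj u v)
    (hcyc : ¬ ∃ (a : V) (c : G.Walk a a), c.IsCycle ∧ k ≤ c.length)
    (hmat : ∀ M : G.Subgraph, M.IsMatching → M.verts.ncard < 2 * (s + 1)) :
    ¬ ∃ (a : {w : V // w ≠ v}) (c : (contractEdge G u v).Walk a a), c.IsCycle ∧ k ≤ c.length :=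
  stmt_5_general G k u v huv hcyc
end

section
/- Let p ≥ 3 and s ≥ p be integers, and write s − p + 1 = a(p−2) + b with 0 ≤ b ≤ p−3. Let n be large enough. Then the graph G_1 = K_1 ∨ (K_{p−2} ∨ I_{n−p+1−a(2p−3)} ∪ a·K_{2p−3}) on n vertices contains no cycle of length at least 2p−1 and no matching of size s+1. -/
/-- The join of two graphs: all edges between the two sides are added. -/
def graphJoin {α β : Type*} (G : SimpleGraph α) (H : SimpleGraph β) : SimpleGraph (α ⊕ β) where
  Adj x y := match x, y with
    | Sum.inl a, Sum.inl b => G.Adj a b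
    | Sum.inr a, Sum.inr b => H.Adj a b
    | _, _ => True
  symm := ⟨by rintro (a | a) (b | b) h <;> first | exact h.symm | exact G.adj_symm h | exact H.adj_symm h | trivial⟩
  loopless := ⟨by rintro (a | a) h <;> exact (SimpleGraph.irrefl _) h⟩

/-- The disjoint union of `a` copies of the complete graph `K_m`. -/
def multiK (a m : ℕ) : SimpleGraph (Fin a × Fin m) where
  Adj x y := x.1 = y.1 ∧ x.2 ≠ y.2
  symm := ⟨by rintro x y ⟨h1, h2⟩; exact ⟨h1.symm, h2.symm⟩⟩
  loopless := ⟨by rintro x ⟨h1, h2⟩; exact h2 rfl⟩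

/-- `G` has no cycle of length at least `k`. -/
def NoLongCycle {α : Type*} (G : SimpleGraph α) (k : ℕ) : Prop :=
  ¬ ∃ (a : α) (c : G.Walk a a), c.IsCycle ∧ k ≤ c.length

/-- `G` has no matching consisting of `m` pairwise disjoint edges. -/
def NoMatchingOfSize {α : Type*} (G : SimpleGraph α) (m : ℕ) : Prop :=
  ∀ M : G.Subgraph, M.IsMatching → M.verts.ncard < 2 * m

/-- The extremal graph `G₁ = K₁ ∨ (K_{p-2} ∨ I_{n-p+1-a(2p-3)} ∪ a K_{2p-3})`. -/
def G1 (p a n : ℕ) :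
    SimpleGraph (Fin 1 ⊕ ((Fin (p - 2) ⊕ Fin (n - p + 1 - a * (2 * p - 3))) ⊕
      (Fin a × Fin (2 * p - 3)))) :=
  graphJoin (⊤ : SimpleGraph (Fin 1))
    ((graphJoin (⊤ : SimpleGraph (Fin (p - 2)))
        (⊥ : SimpleGraph (Fin (n - p + 1 - a * (2 * p - 3))))) ⊕g (multiK a (2 * p - 3)))

/-!
Every edge of `G₁` that misses the hub `K₁ ∪ K_{p-2}` (`p - 1` vertices) lies inside one of the
copies of `K_{2p-3}`. A cycle all of whose edges meet the hub has length at most `2(p - 1)`.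
Otherwise it uses an edge of some copy; as deleting the apex `K₁` disconnects the copies from
each other and from `K_{p-2} ∨ I`, the whole cycle then lies in the apex plus that copy, which has
`2p - 2` vertices. A matching has at most `p - 1` edges meeting the hub and at most `p - 2` inside
each copy, hence at most `p - 1 + a(p - 2) ≤ s` edges.
-/

open Finset

namespace SimpleGraph.Walk

variable {V : Type*} {G : SimpleGraph V}

lemma apply_getVert_eq_of_forall_ne {β : Type*} {f : V → β} {w : V}
    (hf : ∀ x y, G.Adj x y → x ≠ w → y ≠ w → f x = f y) {u v : V} (p : G.Walk u v) :
    ∀ n ≤ p.length, (∀ k ≤ n, p.getVert k ≠ w) → f u = f (p.getVert n) := by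
  intro n
  induction n with
  | zero => simp
  | succ n ih =>
    intro hn hne
    rw [ih (by omega) fun k hk => hne k (by omega)]
    exact hf _ _ (p.adj_getVert_succ (by omega)) (hne n (by omega)) (hne (n + 1) le_rfl)

theorem IsCycle.exists_forall_apply_eq_of_adj_off {β : Type*} {f : V → β} {w : V}
    (hf : ∀ x y, G.Adj x y → x ≠ w → y ≠ w → f x = f y) {u : V} {c : G.Walk u u}
    (hc : c.IsCycle) : ∃ b, ∀ x ∈ c.support, x ≠ w → f x = b := by
  classical
  by_cases hw : w ∈ c.support
  -- Rotated to start at `w`, the cycle continues along a path that meets `w` only at its end.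
  · have ht : (c.rotate w hw).tail.IsPath := (hc.rotate hw).isPath_tail
    refine ⟨f (c.rotate w hw).snd, fun x hx hxw => ?_⟩
    rw [← mem_support_rotate_iff c w hw, ← cons_support_tail (hc.rotate hw).not_nil,
      List.mem_cons] at hx
    obtain ⟨n, hnx, hn⟩ := mem_support_iff_exists_getVert.mp (hx.resolve_left hxw)
    rw [← hnx]
    refine (apply_getVert_eq_of_forall_ne hf _ n hn fun k hk hkw => hxw ?_).symm
    have : k = (c.rotate w hw).tail.length :=
      ht.getVert_injOn (hk.trans hn) (by simp) (hkw.trans (getVert_length _).symm)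
    rw [← hnx, show n = k by omega, hkw]
  · refine ⟨f u, fun x hx _ => ?_⟩
    obtain ⟨n, rfl, hn⟩ := mem_support_iff_exists_getVert.mp hx
    exact (apply_getVert_eq_of_forall_ne hf c n hn fun k _ hkw =>
      hw (hkw ▸ c.getVert_mem_support k)).symm

theorem IsCycle.length_le_card_of_support_subset {u : V} {c : G.Walk u u} (hc : c.IsCycle)
    {S : Finset V} (hS : ∀ x ∈ c.support, x ∈ S) : c.length ≤ #S := by
  classical
  calc c.length = c.support.tail.toFinset.card := by
        rw [List.toFinset_card_of_nodup hc.support_nodup]; simp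
    _ ≤ #S := card_le_card fun x hx => hS x (List.mem_of_mem_tail (List.mem_toFinset.mp hx))

theorem IsCycle.length_le_two_mul_card_of_forall_dart {u : V} {c : G.Walk u u}
    (hc : c.IsCycle) {H : Finset V} (hH : ∀ d ∈ c.darts, d.fst ∈ H ∨ d.snd ∈ H) :
    c.length ≤ 2 * #H := by
  classical
  -- Each vertex of `H` is the tail of at most one dart of `c` and the head of at most one.
  have hcount : ∀ l : List V, l.Nodup → l.countP (· ∈ H) ≤ #H := fun l hl => by
    rw [List.countP_eq_length_filter, ← List.toFinset_card_of_nodup (hl.filter _)]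
    exact card_le_card fun x hx => by simp_all
  have hfst := hcount _ hc.nodup_dropLast_support
  have hsnd := hcount _ hc.support_nodup
  rw [← map_fst_darts, List.countP_map] at hfst
  rw [← map_snd_darts, List.countP_map] at hsnd
  have hmono : c.darts.countP (fun d => d.fst ∉ H) ≤ c.darts.countP (fun d => d.snd ∈ H) :=
    List.countP_mono_left fun d hd h => by simpa using (hH d hd).resolve_left (by simpa using h)
  have hsplit := List.length_eq_countP_add_countP (fun d : G.Dart => d.fst ∈ H) (l := c.darts)
  simp only [Function.comp_def, decide_eq_true_eq] at hfst hsnd hsplit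
  rw [← length_darts]
  omega

end SimpleGraph.Walk

namespace SimpleGraph.Subgraph

variable {V : Type*} {G : SimpleGraph V} {M : G.Subgraph}

lemma IsMatching.even_ncard_of_closed [Finite V] (hM : M.IsMatching) {T : Set V}
    (hT : T ⊆ M.verts) (hclosed : ∀ v w, v ∈ T → M.Adj v w → w ∈ T) : Even T.ncard := by
  classical
  have := Fintype.ofFinite V
  have hMT : (M.induce T).IsMatching := fun v hv => by
    obtain ⟨w, hvw, huniq⟩ := hM (hT hv)
    exact ⟨w, ⟨hv, hclosed v w hv hvw, hvw⟩, fun y hy => huniq y hy.2.2⟩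
  simpa [Set.ncard_eq_toFinset_card'] using hMT.even_card

/-- The easy half of the Tutte–Berge formula, in its odd-set-cover form. -/
theorem IsMatching.ncard_verts_le_of_cover [Finite V] (hM : M.IsMatching) (H : Finset V)
    {ι : Type*} (J : Finset ι) (B : ι → Finset V)
    (hB : ∀ u v, G.Adj u v → u ∉ H → v ∉ H → ∃ j ∈ J, u ∈ B j ∧ v ∈ B j) :
    M.verts.ncard ≤ 2 * (#H + ∑ j ∈ J, #(B j) / 2) := by
  classical
  have := Fintype.ofFinite V
  set N : Finset V := H ∪ H.biUnion fun h => {v | M.Adj h v}.toFinset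
  set T : ι → Finset V := fun j => {v ∈ B j | ∃ w ∈ B j, M.Adj v w}
  have hN : #N ≤ 2 * #H := by
    refine (card_union_le _ _).trans ?_
    have := card_biUnion_le_card_mul H (fun h => {v | M.Adj h v}.toFinset) 1 fun h _ =>
      card_le_one.mpr fun x hx y hy => hM.eq_of_adj_left (by simpa using hx) (by simpa using hy)
    omega
  have hT : ∀ j, #(T j) ≤ 2 * (#(B j) / 2) := fun j => by
    have hsub : T j ⊆ B j := filter_subset _ _
    have heven : Even #(T j) := by
      rw [← Set.ncard_coe_finset]
      refine hM.even_ncard_of_closed (fun v hv => ?_) fun v w hv hvw => ?_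
      · obtain ⟨-, w, -, hvw⟩ := mem_filter.mp hv
        exact M.edge_vert hvw
      · obtain ⟨hvB, w', hw'B, hvw'⟩ := mem_filter.mp hv
        rw [hM.eq_of_adj_left hvw hvw']
        exact mem_filter.mpr ⟨hw'B, v, hvB, hvw'.symm⟩
    obtain ⟨k, hk⟩ := heven
    have := card_le_card hsub
    omega
  have hcover : M.verts.toFinset ⊆ N ∪ J.biUnion T := fun v hv => by
    obtain ⟨w, hvw, -⟩ := hM (Set.mem_toFinset.mp hv)
    by_cases hvH : v ∈ H
    · exact mem_union_left _ (mem_union_left _ hvH)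
    by_cases hwH : w ∈ H
    · exact mem_union_left _
        (mem_union_right _ (mem_biUnion.mpr ⟨w, hwH, by simpa using hvw.symm⟩))
    obtain ⟨j, hj, hvB, hwB⟩ := hB v w (M.adj_sub hvw) hvH hwH
    exact mem_union_right _ (mem_biUnion.mpr ⟨j, hj, mem_filter.mpr ⟨hvB, w, hwB, hvw⟩⟩)
  calc M.verts.ncard = #M.verts.toFinset := Set.ncard_eq_toFinset_card' _
    _ ≤ #N + ∑ j ∈ J, #(T j) := (card_le_card hcover).trans
        ((card_union_le _ _).trans (add_le_add_right card_biUnion_le _))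
    _ ≤ 2 * #H + ∑ j ∈ J, 2 * (#(B j) / 2) := add_le_add hN (sum_le_sum fun j _ => hT j)
    _ = 2 * (#H + ∑ j ∈ J, #(B j) / 2) := by rw [← mul_sum, mul_add]

end SimpleGraph.Subgraph

namespace G1

abbrev Vert (p a n : ℕ) : Type :=
  Fin 1 ⊕ ((Fin (p - 2) ⊕ Fin (n - p + 1 - a * (2 * p - 3))) ⊕ (Fin a × Fin (2 * p - 3)))

variable {p a n : ℕ}

-- `apex` is the `K₁`, `hub` adds the `K_{p-2}`, `copy j` is the `j`-th `K_{2p-3}`, and `block`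
-- records which copy (if any) a vertex lies in.
def apex : Vert p a n := Sum.inl 0

def hub : Finset (Vert p a n) :=
  insert apex (univ.image fun k => Sum.inr (Sum.inl (Sum.inl k)))

def copy (j : Fin a) : Finset (Vert p a n) :=
  univ.image fun u => Sum.inr (Sum.inr (j, u))

def block : Vert p a n → Option (Fin a)
  | Sum.inr (Sum.inr (j, _)) => some j
  | _ => none

lemma card_hub_le : #(hub : Finset (Vert p a n)) ≤ p - 2 + 1 :=
  (card_insert_le _ _).trans (Nat.succ_le_succ (card_image_le.trans (by simp)))

lemma card_copy_le (j : Fin a) : #(copy j : Finset (Vert p a n)) ≤ 2 * p - 3 :=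
  card_image_le.trans (by simp)

lemma mem_copy_iff {j : Fin a} {x : Vert p a n} : x ∈ copy j ↔ block x = some j := by
  rcases x with _ | (_ | _) | ⟨j', u⟩ <;> simp [copy, block, eq_comm]

lemma block_eq_of_adj {x y : Vert p a n} (h : (G1 p a n).Adj x y) (hx : x ≠ apex)
    (hy : y ≠ apex) : block x = block y := by
  rcases x with x | (x | x) | ⟨j, u⟩ <;> rcases y with y | (y | y) | ⟨j', u'⟩ <;>
    simp_all [G1, graphJoin, multiK, block, apex, Fin.fin_one_eq_zero]

lemma exists_copy_of_adj {x y : Vert p a n} (h : (G1 p a n).Adj x y) (hx : x ∉ hub)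
    (hy : y ∉ hub) : ∃ j, x ∈ copy j ∧ y ∈ copy j := by
  rcases x with x | (x | x) | ⟨j, u⟩ <;> rcases y with y | (y | y) | ⟨j', u'⟩ <;>
    simp_all [G1, graphJoin, multiK, hub, copy, apex, Fin.fin_one_eq_zero]

theorem noLongCycle : NoLongCycle (G1 p a n) (2 * p - 1) := by
  rintro ⟨u, c, hc, hlen⟩
  obtain ⟨d, hd, hfst, hsnd⟩ : ∃ d ∈ c.darts, d.fst ∉ hub ∧ d.snd ∉ hub := by
    by_contra! h
    have := hc.length_le_two_mul_card_of_forall_dart fun d hd => or_iff_not_imp_left.mpr (h d hd)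
    have := hc.three_le_length
    have hhub : #(hub : Finset (Vert p a n)) ≤ p - 2 + 1 := card_hub_le
    omega
  obtain ⟨j, hj, -⟩ := exists_copy_of_adj d.adj hfst hsnd
  obtain ⟨b, hb⟩ := hc.exists_forall_apply_eq_of_adj_off (w := apex) (f := block)
    fun _ _ h => block_eq_of_adj h
  have hsupp : ∀ x ∈ c.support, x ∈ insert apex (copy j) := fun x hx => by
    by_cases hxa : x = apex
    · exact hxa ▸ mem_insert_self _ _
    have hda : d.fst ≠ apex := fun h => hfst (h ▸ mem_insert_self _ _)
    rw [mem_copy_iff, hb d.fst (c.dart_fst_mem_support_of_mem_darts hd) hda] at hj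
    exact mem_insert_of_mem (mem_copy_iff.mpr ((hb x hx hxa).trans hj))
  have := (hc.length_le_card_of_support_subset hsupp).trans (card_insert_le _ _)
  have hcopy : #(copy j : Finset (Vert p a n)) ≤ 2 * p - 3 := card_copy_le j
  have := hc.three_le_length
  omega

theorem noMatchingOfSize {s : ℕ} (hp : 2 ≤ p) (hs : p - 1 + a * (p - 2) ≤ s) :
    NoMatchingOfSize (G1 p a n) (s + 1) := by
  intro M hM
  have hbound := hM.ncard_verts_le_of_cover hub univ copy fun x y h hx hy => by
    simpa using exists_copy_of_adj h hx hy
  have hcopies : ∑ j : Fin a, #(copy j : Finset (Vert p a n)) / 2 ≤ a * (p - 2) := by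
    calc ∑ j : Fin a, #(copy j : Finset (Vert p a n)) / 2 ≤ ∑ _j : Fin a, (p - 2) :=
          sum_le_sum fun j _ => by have := card_copy_le (p := p) (n := n) j; omega
      _ = a * (p - 2) := by simp
  have hhub : #(hub : Finset (Vert p a n)) ≤ p - 2 + 1 := card_hub_le
  omega

end G1

theorem stmt_8_general (p s a b : ℕ) (hp : 3 ≤ p) (hs : p ≤ s)
    (hab : s - p + 1 = a * (p - 2) + b) :
    ∃ N : ℕ, ∀ n : ℕ, N ≤ n →
      NoLongCycle (G1 p a n) (2 * p - 1) ∧ NoMatchingOfSize (G1 p a n) (s + 1) := by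
  have hcount : p - 1 + a * (p - 2) ≤ s := by
    generalize a * (p - 2) = t at hab
    omega
  exact ⟨0, fun n _ => ⟨G1.noLongCycle, G1.noMatchingOfSize (by omega) hcount⟩⟩

theorem stmt_8 (p s a b : ℕ) (hp : 3 ≤ p) (hs : p ≤ s)
    (hab : s - p + 1 = a * (p - 2) + b) (hb : b ≤ p - 3) :
    ∃ N : ℕ, ∀ n : ℕ, N ≤ n →
      NoLongCycle (G1 p a n) (2 * p - 1) ∧ NoMatchingOfSize (G1 p a n) (s + 1) :=
  stmt_8_general p s a b hp hs hab
end

section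
/- For all integers p ≥ 3 and r ≥ 3, C(2p−1, r) ≥ 2·C(p−1, r−1) + C(p−1, r−2) + (2p−4)·C(p−1, r−1). -/
/-!
By Vandermonde's identity `C(2p-1, r) = ∑ᵢ C(p, i) C(p-1, r-i)`, and the two terms `i = 1, 2`
already give `p C(p-1, r-1) + C(p, 2) C(p-1, r-2)`. The ratio estimate
`2 C(p-1, r-1) ≤ (p-2) C(p-1, r-2)`, valid as `r ≥ 3`, shows that this exceeds the left-hand side.
-/

namespace Nat

theorem two_mul_choose_add_two_le (n k : ℕ) :
    2 * n.choose (k + 2) ≤ (n - 1) * n.choose (k + 1) :=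
  calc 2 * n.choose (k + 2) ≤ n.choose (k + 2) * (k + 2) := by rw [mul_comm]; gcongr; omega
    _ = n.choose (k + 1) * (n - (k + 1)) := choose_succ_right_eq n (k + 1)
    _ ≤ (n - 1) * n.choose (k + 1) := by rw [mul_comm]; gcongr; omega

open Finset in
theorem mul_choose_add_choose_two_mul_choose_le (m n k : ℕ) :
    m * n.choose (k + 1) + m.choose 2 * n.choose k ≤ (m + n).choose (k + 2) := by
  rw [add_choose_eq]
  have h₁ : ((1, k + 1) : ℕ × ℕ) ∈ antidiagonal (k + 2) := mem_antidiagonal.mpr (by simp; omega)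
  have h₂ : ((2, k) : ℕ × ℕ) ∈ antidiagonal (k + 2) := mem_antidiagonal.mpr (by simp; omega)
  simpa using add_le_sum (f := fun ij ↦ m.choose ij.1 * n.choose ij.2)
    (fun _ _ ↦ Nat.zero_le _) h₁ h₂ (by simp)

end Nat

theorem stmt_13 (p r : ℕ) (hp : 3 ≤ p) (hr : 3 ≤ r) :
    2 * Nat.choose (p - 1) (r - 1) + Nat.choose (p - 1) (r - 2)
      + (2 * p - 4) * Nat.choose (p - 1) (r - 1) ≤ Nat.choose (2 * p - 1) r := by
  obtain ⟨q, rfl⟩ := Nat.exists_eq_add_of_le' hp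
  obtain ⟨s, rfl⟩ := Nat.exists_eq_add_of_le' hr
  have hratio := Nat.two_mul_choose_add_two_le (q + 2) s
  have hvandermonde := Nat.mul_choose_add_choose_two_mul_choose_le (q + 3) (q + 2) (s + 1)
  have hpairs : (q + 3).choose 2 * 2 = (q + 3) * (q + 2) := by
    simpa using Nat.choose_succ_right_eq (q + 3) 1
  rw [show q + 3 + (q + 2) = 2 * (q + 3) - 1 by omega] at hvandermonde
  simp only [show q + 3 - 1 = q + 2 by omega, show s + 3 - 1 = s + 2 by omega,
    show s + 3 - 2 = s + 1 by omega, show 2 * (q + 3) - 4 = 2 * q + 2 by omega,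
    show q + 2 - 1 = q + 1 by omega] at hratio ⊢
  nlinarith
end

section
/- Let G be a graph with vertex partition V(G) = X ∪ Y ∪ Z where G[X ∪ Y] is the complete split graph K_{p−1} ∨ I_{|Y|} (X induces K_{p−1}, Y is independent, all X–Y edges present, |Y| ≥ 2p), and suppose there is a path P in G[Z ∪ X] whose two endpoints lie in X with |V(P) ∩ Z| ≥ |V(P) ∩ X| = 2. Then G contains a cycle of length at least 2p−1. -/
open SimpleGraph Walk

lemma zigzag {V : Type*} [DecidableEq V] (G : SimpleGraph V) (X Y : Set V) (b : V) (hb : b ∈ X)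
    (hXY : Disjoint X Y) (hXYfull : ∀ x ∈ X, ∀ y ∈ Y, G.Adj x y) :
    ∀ n (A B : Finset V), ↑A ⊆ X \ {b} → ↑B ⊆ Y → A.card = n → B.card = n + 1 →
    ∃ y, y ∈ B ∧ ∃ Q : G.Walk b y, Q.IsPath ∧ Q.length = 2 * n + 1 ∧
      (∀ v ∈ Q.support.tail, v ∈ (↑A ∪ ↑B : Set V)) := by
  intro n
  induction n with
  | zero =>
    intro A B hA hB hAc hBc
    obtain ⟨y, hy⟩ := Finset.card_eq_one.mp hBc
    subst hy
    have hyY : y ∈ Y := hB (Finset.mem_singleton_self y)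
    have hadj : G.Adj b y := hXYfull b hb y hyY
    refine ⟨y, Finset.mem_singleton_self y, Walk.cons hadj Walk.nil, ?_, by simp, ?_⟩
    · simp [Walk.isPath_def, hadj.ne]
    · intro v hv
      simp only [Walk.support_cons, Walk.support_nil, List.tail_cons] at hv
      simp at hv
      simp [hv]
  | succ n ih =>
    intro A B hA hB hAc hBc
    obtain ⟨x, hx⟩ : ∃ x, x ∈ A := Finset.card_pos.mp (by omega) |>.imp (fun _ h => h) |>.elim (fun x h => ⟨x, h⟩)
    obtain ⟨y, hy⟩ : ∃ y, y ∈ B := Finset.card_pos.mp (by omega) |>.imp (fun _ h => h) |>.elim (fun x h => ⟨x, h⟩)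
    have hA' : ↑(A.erase x) ⊆ X \ {b} := (Finset.coe_subset.mpr (Finset.erase_subset x A)).trans hA
    have hB' : ↑(B.erase y) ⊆ Y := (Finset.coe_subset.mpr (Finset.erase_subset y B)).trans hB
    obtain ⟨y', hy', Q', hQ'path, hQ'len, hQ'supp⟩ := ih (A.erase x) (B.erase y) hA' hB'
      (by rw [Finset.card_erase_of_mem hx]; omega) (by rw [Finset.card_erase_of_mem hy]; omega)
    have hxX : x ∈ X := (hA hx).1
    have hxb : x ≠ b := by have := (hA hx).2; simpa using this
    have hyY : y ∈ Y := hB hy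
    have hy'Y : y' ∈ Y := hB' hy'
    have hadj1 : G.Adj y' x := (hXYfull x hxX y' hy'Y).symm
    have hadj2 : G.Adj x y := hXYfull x hxX y hyY
    have hxy : x ≠ y := fun h => hXY.ne_of_mem hxX hyY h
    set Q : G.Walk b y := Q'.append (Walk.cons hadj1 (Walk.cons hadj2 Walk.nil)) with hQ
    have hsupp : Q.support = Q'.support ++ [x, y] := by
      simp [hQ, Walk.support_append]
    have hxQ' : x ∉ Q'.support := by
      intro h
      rw [Walk.support_eq_cons] at h
      rcases List.mem_cons.mp h with h | h
      · exact hxb h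
      · rcases hQ'supp x h with h' | h'
        · exact (Finset.notMem_erase x A) h'
        · exact hXY.ne_of_mem hxX (hB' h') rfl
    have hyQ' : y ∉ Q'.support := by
      intro h
      rw [Walk.support_eq_cons] at h
      rcases List.mem_cons.mp h with h | h
      · exact hXY.ne_of_mem hb hyY h.symm
      · rcases hQ'supp y h with h' | h'
        · exact hXY.ne_of_mem (hA' h').1 hyY rfl
        · exact (Finset.notMem_erase y B) h'
    refine ⟨y, hy, Q, ?_, ?_, ?_⟩
    · rw [Walk.isPath_def, hsupp]
      refine List.Nodup.append hQ'path.support_nodup (by simp [hxy]) ?_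
      intro v hv hv2
      simp at hv2
      rcases hv2 with rfl | rfl
      · exact hxQ' hv
      · exact hyQ' hv
    · simp [hQ, Walk.length_append, hQ'len]; ring
    · intro v hv
      have : Q.support.tail = Q'.support.tail ++ [x, y] := by
        rw [hsupp, Walk.support_eq_cons]; simp
      rw [this] at hv
      rcases List.mem_append.mp hv with h | h
      · rcases hQ'supp v h with h' | h'
        · exact Or.inl (Finset.erase_subset x A h')
        · exact Or.inr (Finset.erase_subset y B h')
      · simp at h
        rcases h with rfl | rfl
        · exact Or.inl hx
        · exact Or.inr hy

/-- If `G` has a partition `X ∪ Y ∪ Z` where `X` induces `K_{p-1}`, `Y` is an independent set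
completely joined to `X` with `|Y| ≥ 2p`, and there is a path in `G[Z ∪ X]` with both ends in `X`
meeting `X` in exactly its two ends and meeting `Z` in at least two vertices, then `G` has a cycle
of length at least `2p - 1`. -/
theorem stmt_16 {V : Type*} [Fintype V] (G : SimpleGraph V) (p : ℕ) (hp : 3 ≤ p)
    (X Y Z : Set V) (hpart : X ∪ Y ∪ Z = Set.univ)
    (hXY : Disjoint X Y) (hXZ : Disjoint X Z) (hYZ : Disjoint Y Z)
    (hXcard : X.ncard = p - 1) (hXclique : G.IsClique X)
    (hYind : ∀ a ∈ Y, ∀ b ∈ Y, ¬ G.Adj a b)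
    (hXYfull : ∀ x ∈ X, ∀ y ∈ Y, G.Adj x y)
    (hYcard : 2 * p ≤ Y.ncard)
    {a b : V} (ha : a ∈ X) (hb : b ∈ X) (hab : a ≠ b)
    (P : G.Walk a b) (hP : P.IsPath)
    (hPZX : ∀ v ∈ P.support, v ∈ Z ∪ X)
    (hPX : {v | v ∈ P.support} ∩ X = {a, b})
    (hPZ : 2 ≤ ({v | v ∈ P.support} ∩ Z).ncard) :
    ∃ (w : V) (c : G.Walk w w), c.IsCycle ∧ 2 * p - 1 ≤ c.length := by
  classical
  -- set A := X \ {a, b}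
  have habX : ({a, b} : Set V) ⊆ X := by
    intro v hv; rcases hv with rfl | rfl; exacts [ha, hb]
  have hAncard : (X \ {a, b}).ncard = p - 3 := by
    rw [Set.ncard_diff habX (Set.toFinite _), Set.ncard_pair hab, hXcard]
    omega
  set A : Finset V := (Set.toFinite (X \ ({a, b} : Set V))).toFinset with hAdef
  have hAcoe : (↑A : Set V) = X \ {a, b} := Set.Finite.coe_toFinset _
  have hAcard : A.card = p - 3 := by
    rw [← Set.ncard_coe_finset, hAcoe, hAncard]
  -- pick B ⊆ Y with card p - 2
  have hYfin := Set.toFinite Y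
  obtain ⟨B, hBsub, hBcard⟩ : ∃ B ⊆ hYfin.toFinset, B.card = p - 2 := by
    apply Finset.exists_subset_card_eq
    rw [← Set.ncard_eq_toFinset_card]
    omega
  have hBY : (↑B : Set V) ⊆ Y := by
    intro v hv; have := hBsub hv; rwa [Set.Finite.mem_toFinset] at this
  -- zigzag walk
  obtain ⟨y, hyB, Q, hQpath, hQlen, hQsupp⟩ :=
    zigzag G X Y b hb hXY hXYfull (p - 3) A B
      (by rw [hAcoe]; intro v hv; exact ⟨hv.1, by simp at hv ⊢; exact hv.2.2⟩)
      hBY hAcard (by omega)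
  have hyY : y ∈ Y := hBY hyB
  -- tail of Q's support avoids P's support
  have hQtail_disj : ∀ v ∈ P.support, v ∈ Q.support.tail → False := by
    intro v hvP hvQ
    rcases hQsupp v hvQ with h | h
    · rw [hAcoe] at h
      have : v ∈ ({a, b} : Set V) := by
        rw [← hPX]; exact ⟨hvP, h.1⟩
      exact h.2 this
    · have hvY : v ∈ Y := hBY h
      rcases hPZX v hvP with h' | h'
      · exact hYZ.ne_of_mem hvY h' rfl
      · exact hXY.ne_of_mem h' hvY rfl
  -- a not in Q's support
  have haQ : a ∉ Q.support := by
    intro h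
    rw [Walk.support_eq_cons] at h
    rcases List.mem_cons.mp h with h | h
    · exact hab h
    · rcases hQsupp a h with h' | h'
      · rw [hAcoe] at h'; exact h'.2 (Or.inl rfl)
      · exact hXY.ne_of_mem ha (hBY h') rfl
  -- the combined walk
  set W : G.Walk a y := P.append Q with hWdef
  have hWpath : W.IsPath := by
    rw [Walk.isPath_def, hWdef, Walk.support_append]
    refine List.Nodup.append hP.support_nodup (hQpath.support_nodup.tail) ?_
    intro v hv hv2
    exact hQtail_disj v hv hv2
  have hadj : G.Adj a y := hXYfull a ha y hyY
  have hedge : s(a, y) ∉ W.edges := by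
    rw [hWdef, Walk.edges_append]
    intro h
    rcases List.mem_append.mp h with h | h
    · have hyP : y ∈ P.support := Walk.snd_mem_support_of_mem_edges P h
      rcases hPZX y hyP with h' | h'
      · exact hYZ.ne_of_mem hyY h' rfl
      · exact hXY.ne_of_mem h' hyY rfl
    · exact haQ (Walk.fst_mem_support_of_mem_edges Q h)
  -- P has length ≥ 3
  have hPlen : 3 ≤ P.length := by
    obtain ⟨z1, z2, hz1, hz2, hz12⟩ :=
      (Set.one_lt_ncard_iff (Set.toFinite _)).mp (by omega : 1 < ({v | v ∈ P.support} ∩ Z).ncard)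
    have hz1Z : z1 ∈ Z := hz1.2
    have hz2Z : z2 ∈ Z := hz2.2
    have hz1a : z1 ≠ a := fun h => hXZ.ne_of_mem ha hz1Z h.symm
    have hz1b : z1 ≠ b := fun h => hXZ.ne_of_mem hb hz1Z h.symm
    have hz2a : z2 ≠ a := fun h => hXZ.ne_of_mem ha hz2Z h.symm
    have hz2b : z2 ≠ b := fun h => hXZ.ne_of_mem hb hz2Z h.symm
    have hsub : ({a, b, z1, z2} : Finset V) ⊆ P.support.toFinset := by
      intro v hv
      simp only [Finset.mem_insert, Finset.mem_singleton] at hv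
      rw [List.mem_toFinset]
      rcases hv with rfl | rfl | rfl | rfl
      · exact P.start_mem_support
      · exact P.end_mem_support
      · exact hz1.1
      · exact hz2.1
    have hc4 : ({a, b, z1, z2} : Finset V).card = 4 := by
      rw [Finset.card_insert_of_notMem (by simp [hab, hz1a.symm, hz2a.symm]),
        Finset.card_insert_of_notMem (by simp [hz1b.symm, hz2b.symm]),
        Finset.card_insert_of_notMem (by simp [hz12]), Finset.card_singleton]
    have := Finset.card_le_card hsub
    rw [hc4, List.toFinset_card_of_nodup hP.support_nodup, Walk.length_support] at this
    omega
  -- build the cycle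
  refine ⟨a, Walk.cons hadj W.reverse, ?_, ?_⟩
  · rw [Walk.cons_isCycle_iff]
    refine ⟨(Walk.isPath_reverse_iff W).mpr hWpath, ?_⟩
    rw [Walk.edges_reverse, List.mem_reverse]
    exact hedge
  · simp only [Walk.length_cons, Walk.length_reverse, hWdef, Walk.length_append, hQlen]
    omega
end

section
/- Let G be a graph with vertex partition V(G) = X ∪ Y ∪ Z where X induces K_{p−1}, Y is an independent set with all edges between X and Y present and |Y| ≥ 2p, and suppose there is a path P in G[Z ∪ X] whose endpoints lie in X with |V(P) ∩ Z| > |V(P) ∩ X| = t ≥ 2. Then G contains a cycle of length at least 2p. -/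
/-!
Close `P` up through the part of the clique it misses. Since `X \ V(P)` has `p - 1 - t` vertices,
one can zigzag from `b` alternately through `Y` and `X \ V(P)`, using `p - t` vertices of `Y`,
and return to `a`; this path has length `2(p - t)` and meets `P` only in `a` and `b`. As `P` has
more than `2t` vertices, it has length at least `2t`, so the cycle has length at least `2p`.
-/

namespace SimpleGraph

variable {V : Type*} {G : SimpleGraph V}

namespace Walk

theorem IsPath.ncard_support {u v : V} {p : G.Walk u v} (hp : p.IsPath) :
    {w | w ∈ p.support}.ncard = p.length + 1 := by
  classical
  have : {w | w ∈ p.support} = ↑p.support.toFinset := by ext; simp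
  rw [this, Set.ncard_coe_finset, List.toFinset_card_of_nodup hp.support_nodup, length_support]

theorem IsPath.ncard_support_inter_add_ncard_support_inter {u v : V} {p : G.Walk u v}
    (hp : p.IsPath) {X Z : Set V} (hXZ : Disjoint X Z) (hpXZ : ∀ w ∈ p.support, w ∈ Z ∪ X) :
    ({w | w ∈ p.support} ∩ X).ncard + ({w | w ∈ p.support} ∩ Z).ncard = p.length + 1 := by
  have hfin : {w | w ∈ p.support}.Finite := p.support.finite_toSet
  have hS : {w | w ∈ p.support} ∩ (X ∪ Z) = {w | w ∈ p.support} :=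
    Set.inter_eq_left.mpr fun w hw => (hpXZ w hw).symm
  rw [← hp.ncard_support, ← Set.ncard_union_eq
    (hXZ.mono Set.inter_subset_right Set.inter_subset_right) (hfin.inter_of_left X)
    (hfin.inter_of_left Z), ← Set.inter_union_distrib_left, hS]

theorem IsPath.append {u v w : V} {p : G.Walk u v} {q : G.Walk v w}
    (hp : p.IsPath) (hq : q.IsPath) (hpq : ∀ x ∈ p.support, x ∈ q.support → x = v) :
    (p.append q).IsPath := by
  have hq' := hq.support_nodup
  rw [← cons_tail_support, List.nodup_cons] at hq'
  rw [isPath_def, support_append]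
  refine List.Nodup.append hp.support_nodup hq'.2 fun x hxp hxq => ?_
  exact hq'.1 (hpq x hxp (List.mem_of_mem_tail hxq) ▸ hxq)

theorem IsPath.isCycle_cons_append {u v w : V} {p : G.Walk u v} {q : G.Walk v w}
    (hp : p.IsPath) (hq : q.IsPath) (hpq : ∀ x ∈ p.support, x ∈ q.support → x = v)
    (hw : w ∉ p.support) (hu : u ∉ q.support) (h : G.Adj w u) :
    (cons h (p.append q)).IsCycle := by
  refine (cons_isCycle_iff _ _).mpr ⟨hp.append hq hpq, fun he => ?_⟩
  rcases List.mem_append.mp (edges_append p q ▸ he) with he | he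
  exacts [hw (p.fst_mem_support_of_mem_edges he), hu (q.snd_mem_support_of_mem_edges he)]

end Walk

theorem IsCompleteBetween.exists_isPath_length_eq {A B : Set V} (hAB : G.IsCompleteBetween A B) :
    ∀ (k : ℕ) {v : V}, v ∈ A → k + 1 ≤ A.ncard → k + 1 ≤ B.ncard →
      ∃ y ∈ B, ∃ R : G.Walk v y, R.IsPath ∧ R.length = 2 * k + 1 ∧ ∀ w ∈ R.support, w ∈ A ∪ B := by
  intro k
  induction k generalizing A B with
  | zero =>
    intro v hv _ hB
    obtain ⟨y, hy⟩ := Set.nonempty_of_ncard_ne_zero (s := B) (by omega)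
    have hvy : G.Adj v y := hAB hv hy
    refine ⟨y, hy, hvy.toWalk, hvy.isPath_toWalk, rfl, ?_⟩
    simp [hv, hy]
  | succ k ih =>
    intro v hv hA hB
    obtain ⟨y, hy⟩ := Set.nonempty_of_ncard_ne_zero (s := B) (by omega)
    have hA' : k + 1 ≤ (A \ {v}).ncard := by rw [Set.ncard_sdiff_singleton_of_mem hv]; omega
    have hB' : k + 1 ≤ (B \ {y}).ncard := by rw [Set.ncard_sdiff_singleton_of_mem hy]; omega
    obtain ⟨x, hx⟩ := Set.nonempty_of_ncard_ne_zero (s := A \ {v}) (by omega)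
    obtain ⟨y', hy', R, hR, hRlen, hRsupp⟩ :=
      ih (fun _ h₁ _ h₂ => hAB h₁.1 h₂.1) hx hA' hB'
    have hvR : v ∉ R.support := fun h => by
      rcases hRsupp v h with h | h
      exacts [h.2 rfl, hAB.disjoint.ne_of_mem hv h.1 rfl]
    have hyR : y ∉ R.support := fun h => by
      rcases hRsupp y h with h | h
      exacts [hAB.disjoint.ne_of_mem h.1 hy rfl, h.2 rfl]
    refine ⟨y', hy'.1, .cons (hAB hv hy) (.cons (hAB hx.1 hy).symm R),
      (hR.cons hyR).cons ?_, by simp [hRlen]; ring, ?_⟩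
    · simp only [Walk.support_cons, List.mem_cons, not_or]
      exact ⟨hAB.disjoint.ne_of_mem hv hy, hvR⟩
    · simp only [Walk.support_cons, List.mem_cons]
      rintro w (rfl | rfl | h)
      exacts [Or.inl hv, Or.inr hy, (hRsupp w h).imp And.left And.left]

end SimpleGraph

open SimpleGraph in
theorem stmt_17_general {V : Type*} [Fintype V] (G : SimpleGraph V) (p t : ℕ) (hp : 3 ≤ p)
    (X Y Z : Set V)
    (hXY : Disjoint X Y) (hXZ : Disjoint X Z) (hYZ : Disjoint Y Z)
    (hXcard : X.ncard = p - 1)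
    (hXYfull : ∀ x ∈ X, ∀ y ∈ Y, G.Adj x y)
    (hYcard : 2 * p ≤ Y.ncard)
    {a b : V} (ha : a ∈ X) (hb : b ∈ X) (hab : a ≠ b)
    (P : G.Walk a b) (hP : P.IsPath)
    (hPZX : ∀ v ∈ P.support, v ∈ Z ∪ X)
    (hPX : ({v | v ∈ P.support} ∩ X).ncard = t)
    (hPZ : t < ({v | v ∈ P.support} ∩ Z).ncard) :
    ∃ (w : V) (c : G.Walk w w), c.IsCycle ∧ 2 * p ≤ c.length := by
  set S : Set V := {v | v ∈ P.support}
  have hPcard : (S ∩ X).ncard + (S ∩ Z).ncard = P.length + 1 :=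
    hP.ncard_support_inter_add_ncard_support_inter hXZ hPZX
  have hfresh : (X \ S).ncard + t = p - 1 := by
    rw [← hXcard, ← Set.ncard_inter_add_ncard_sdiff_eq_ncard X S, Set.inter_comm, hPX, add_comm]
  have hbS : b ∈ S := P.end_mem_support
  have hcomplete : G.IsCompleteBetween (insert b (X \ S)) Y := by
    rintro x hx y hy
    exact hXYfull x (by rcases hx with rfl | hx; exacts [hb, hx.1]) y hy
  obtain ⟨y, hy, R, hR, hRlen, hRsupp⟩ := hcomplete.exists_isPath_length_eq (p - t - 1)
    (Set.mem_insert b _) (by rw [Set.ncard_insert_of_notMem (fun h => h.2 hbS)]; omega) (by omega)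
  have hYP : ∀ y ∈ Y, y ∉ P.support := fun y hy h => by
    rcases hPZX y h with h | h
    exacts [hYZ.ne_of_mem hy h rfl, hXY.ne_of_mem h hy rfl]
  have haR : a ∉ R.support := fun h => by
    rcases hRsupp a h with (rfl | h) | h
    exacts [hab rfl, h.2 P.start_mem_support, hXY.ne_of_mem ha h rfl]
  have hPR : ∀ x ∈ P.support, x ∈ R.support → x = b := fun x hxP hxR => by
    rcases hRsupp x hxR with (rfl | h) | h
    exacts [rfl, (h.2 hxP).elim, (hYP x h hxP).elim]
  refine ⟨y, .cons (hXYfull a ha y hy).symm (P.append R),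
    hP.isCycle_cons_append hR hPR (hYP y hy) haR _, ?_⟩
  rw [Walk.length_cons, Walk.length_append, hRlen]
  omega

/-- If `G` has a partition `X ∪ Y ∪ Z` where `X` induces `K_{p-1}`, `Y` is an independent set
completely joined to `X` with `|Y| ≥ 2p`, and there is a path in `G[Z ∪ X]` with both ends in `X`
meeting `X` in exactly `t ≥ 2` vertices and meeting `Z` in more than `t` vertices, then `G` has a
cycle of length at least `2p`. -/
theorem stmt_17 {V : Type*} [Fintype V] (G : SimpleGraph V) (p t : ℕ) (hp : 3 ≤ p) (ht : 2 ≤ t)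
    (X Y Z : Set V) (hpart : X ∪ Y ∪ Z = Set.univ)
    (hXY : Disjoint X Y) (hXZ : Disjoint X Z) (hYZ : Disjoint Y Z)
    (hXcard : X.ncard = p - 1) (hXclique : G.IsClique X)
    (hYind : ∀ a ∈ Y, ∀ b ∈ Y, ¬ G.Adj a b)
    (hXYfull : ∀ x ∈ X, ∀ y ∈ Y, G.Adj x y)
    (hYcard : 2 * p ≤ Y.ncard)
    {a b : V} (ha : a ∈ X) (hb : b ∈ X) (hab : a ≠ b)
    (P : G.Walk a b) (hP : P.IsPath)
    (hPZX : ∀ v ∈ P.support, v ∈ Z ∪ X)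
    (hPX : ({v | v ∈ P.support} ∩ X).ncard = t)
    (hPZ : t < ({v | v ∈ P.support} ∩ Z).ncard) :
    ∃ (w : V) (c : G.Walk w w), c.IsCycle ∧ 2 * p ≤ c.length :=
  stmt_17_general G p t hp X Y Z hXY hXZ hYZ hXcard hXYfull hYcard ha hb hab P hP hPZX hPX hPZ
end
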